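/- The weight-m operator Z̄ = Zop {0, 1, …, m−1} (the product of Z over one representative of each antipodal pair) is a logical Z operator of the X–I code Ξ(2m): it commutes with every Z-generator and every X-generator of Ξ(2m), and it satisfies Z̄ |0̄⟩ = |0̄⟩ and Z̄ |1̄⟩ = −|1̄⟩. -/

import Mathlib

open scoped BigOperators

/-- Bit strings on `2m` qubits. -/
abbrev Bits (m : ℕ) := Fin (2*m) → ZMod 2

/-- The `2m`-qubit Hilbert space, as functions from computational basis labels to `ℂ`. -/
abbrev QState (m : ℕ) := Bits m → ℂ

/-- Indicator bit string of a finite set of qubits. -/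
def indSet (m : ℕ) (S : Finset (Fin (2*m))) : Bits m := fun i => if i ∈ S then 1 else 0

/-- The Pauli-X operator on the set `S`: sends `|x⟩` to `|x + 1_S⟩`. -/
def Xop (m : ℕ) (S : Finset (Fin (2*m))) : QState m →ₗ[ℂ] QState m where
  toFun v := fun x => v (x + indSet m S)
  map_add' _ _ := rfl
  map_smul' _ _ := rfl

/-- The Pauli-Z operator on the set `S`: sends `|x⟩` to `(-1)^{∑_{i∈S} x i} |x⟩`. -/
def Zop (m : ℕ) (S : Finset (Fin (2*m))) : QState m →ₗ[ℂ] QState m where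
  toFun v := fun x => ((-1 : ℂ) ^ (∑ i ∈ S, (x i).val)) * v x
  map_add' u v := by funext x; simp [mul_add]
  map_smul' c v := by funext x; simp; ring

/-- The antipodal involution `τ i = i + m (mod 2m)`. -/
def tau (m : ℕ) (i : Fin (2*m)) : Fin (2*m) :=
  ⟨(i.val + m) % (2*m), Nat.mod_lt _ (by have := i.isLt; omega)⟩

/-- The computational basis state `|x⟩`. -/
def ket (m : ℕ) (x : Bits m) : QState m := fun y => if y = x then 1 else 0

/-- The pair-equal bit string determined by `b : Fin m → ZMod 2`. -/
def xb (m : ℕ) (b : Fin m → ZMod 2) : Bits m :=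
  fun i => b ⟨i.val % m, Nat.mod_lt _ (by have := i.isLt; omega)⟩

/-- The logical codeword `|0̄⟩` of the X–I code `Ξ(2m)`. -/
noncomputable def ket0 (m : ℕ) : QState m :=
  ((Real.sqrt (2 ^ (m-1)) : ℂ))⁻¹ •
    ∑ b ∈ Finset.univ.filter (fun b : Fin m → ZMod 2 => ∑ i, b i = 0), ket m (xb m b)

/-- The logical codeword `|1̄⟩` of the X–I code `Ξ(2m)`. -/
noncomputable def ket1 (m : ℕ) : QState m :=
  ((Real.sqrt (2 ^ (m-1)) : ℂ))⁻¹ •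
    ∑ b ∈ Finset.univ.filter (fun b : Fin m → ZMod 2 => ∑ i, b i = 1), ket m (xb m b)

/-- The set `{0, 1, …, m−1}` of qubits, one representative from each antipodal pair. -/
def lowerHalf (m : ℕ) : Finset (Fin (2*m)) :=
  Finset.univ.filter (fun i : Fin (2*m) => i.val < m)

/-!
`Z̄` is diagonal, so it commutes with the Z-generators. It meets each antipodal pair `{j, τ j}`
in exactly one qubit, so it overlaps an X-generator in two qubits and commutes with it. On a
pair-equal basis state `|x_b⟩` it reads only the lower copy of `b`, giving the phase
`(-1)^(Σ b_i)`, which is `+1` on every term of `|0̄⟩` and `-1` on every term of `|1̄⟩`.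
-/

open Finset

lemma neg_one_pow_sum_val {ι : Type*} (s : Finset ι) (f : ι → ZMod 2) :
    (-1 : ℂ) ^ (∑ i ∈ s, (f i).val) = (-1) ^ (∑ i ∈ s, f i).val := by
  rw [neg_one_pow_eq_pow_mod_two, ← ZMod.val_natCast, Nat.cast_sum]
  simp only [ZMod.natCast_zmod_val]

lemma sum_indSet {m : ℕ} (S T : Finset (Fin (2*m))) :
    ∑ i ∈ S, indSet m T i = #(S ∩ T) := by
  simp only [indSet, sum_boole, filter_mem_eq_inter]

section Operators

variable {m : ℕ}

lemma Zop_comp_Zop_comm (S T : Finset (Fin (2*m))) :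
    (Zop m S).comp (Zop m T) = (Zop m T).comp (Zop m S) := by
  refine LinearMap.ext fun v => funext fun x => ?_
  simp only [LinearMap.comp_apply, Zop, LinearMap.coe_mk, AddHom.coe_mk]
  ring

lemma Zop_comp_Xop_comm_of_even {S T : Finset (Fin (2*m))} (h : Even #(S ∩ T)) :
    (Zop m S).comp (Xop m T) = (Xop m T).comp (Zop m S) := by
  refine LinearMap.ext fun v => funext fun x => ?_
  simp only [LinearMap.comp_apply, Zop, Xop, LinearMap.coe_mk, AddHom.coe_mk]
  have hsum : ∑ i ∈ S, (x + indSet m T) i = ∑ i ∈ S, x i := by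
    simp only [Pi.add_apply, sum_add_distrib, sum_indSet, h.natCast_zmod_two, add_zero]
  rw [neg_one_pow_sum_val S (x + indSet m T), neg_one_pow_sum_val S x, hsum]

lemma Zop_ket (S : Finset (Fin (2*m))) (x : Bits m) :
    Zop m S (ket m x) = (-1 : ℂ) ^ (∑ i ∈ S, x i).val • ket m x := by
  ext y
  by_cases h : y = x
  · subst h
    simp [Zop, ket, neg_one_pow_sum_val]
  · simp [Zop, ket, h]

end Operators

section Antipodal

variable {m : ℕ}

lemma tau_val (j : Fin (2*m)) :
    (tau m j).val = if j.val < m then j.val + m else j.val - m := by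
  have hj := j.isLt
  show (j.val + m) % (2*m) = _
  split_ifs
  · exact Nat.mod_eq_of_lt (by omega)
  · rw [Nat.mod_eq_sub_mod (by omega), Nat.mod_eq_of_lt (by omega)]
    omega

lemma tau_tau (j : Fin (2*m)) : tau m (tau m j) = j := by
  ext
  rw [tau_val, tau_val]
  split_ifs <;> omega

lemma mem_lowerHalf {i : Fin (2*m)} : i ∈ lowerHalf m ↔ i.val < m := by
  simp [lowerHalf]

lemma tau_mem_lowerHalf_iff (j : Fin (2*m)) : tau m j ∈ lowerHalf m ↔ j ∉ lowerHalf m := by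
  have hj := j.isLt
  rw [mem_lowerHalf, mem_lowerHalf, tau_val]
  split_ifs <;> omega

lemma pair_tau_eq_of_mem {i j : Fin (2*m)} (h : i ∈ ({j, tau m j} : Finset (Fin (2*m)))) :
    ({i, tau m i} : Finset (Fin (2*m))) = {j, tau m j} := by
  rcases mem_insert.mp h with rfl | h
  · rfl
  · rw [mem_singleton.mp h, tau_tau, pair_comm]

lemma disjoint_pair_tau {j k : Fin (2*m)}
    (h : ({j, tau m j} : Finset (Fin (2*m))) ≠ {k, tau m k}) :
    Disjoint ({j, tau m j} : Finset (Fin (2*m))) {k, tau m k} := by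
  rw [disjoint_left]
  intro i hj hk
  exact h ((pair_tau_eq_of_mem hj).symm.trans (pair_tau_eq_of_mem hk))

lemma card_lowerHalf_inter_pair_tau (j : Fin (2*m)) : #(lowerHalf m ∩ {j, tau m j}) = 1 := by
  by_cases hj : j ∈ lowerHalf m
  · have hτ : tau m j ∉ lowerHalf m := fun h => (tau_mem_lowerHalf_iff j).mp h hj
    rw [inter_insert_of_mem hj, inter_singleton_of_notMem hτ, insert_empty, card_singleton]
  · have hτ : tau m j ∈ lowerHalf m := (tau_mem_lowerHalf_iff j).mpr hj
    rw [inter_insert_of_notMem hj, inter_singleton_of_mem hτ, card_singleton]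

lemma card_lowerHalf_inter_two_pairs_tau {j k : Fin (2*m)}
    (h : ({j, tau m j} : Finset (Fin (2*m))) ≠ {k, tau m k}) :
    #(lowerHalf m ∩ {j, tau m j, k, tau m k}) = 2 := by
  have hunion : ({j, tau m j, k, tau m k} : Finset (Fin (2*m))) = {j, tau m j} ∪ {k, tau m k} := by
    rw [insert_union, singleton_union]
  rw [hunion, inter_union_distrib_left,
    card_union_of_disjoint ((disjoint_pair_tau h).mono inter_subset_right inter_subset_right),
    card_lowerHalf_inter_pair_tau, card_lowerHalf_inter_pair_tau]

end Antipodal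

section Codewords

variable {m : ℕ}

lemma lowerHalf_eq_map_castLE : lowerHalf m = univ.map (Fin.castLEEmb (by omega : m ≤ 2*m)) := by
  ext i
  simp only [mem_lowerHalf, mem_map, mem_univ, true_and, Fin.castLEEmb_apply]
  exact ⟨fun h => ⟨⟨i, h⟩, rfl⟩, fun ⟨a, ha⟩ => ha ▸ a.isLt⟩

lemma sum_lowerHalf_xb (b : Fin m → ZMod 2) : ∑ i ∈ lowerHalf m, xb m b i = ∑ i, b i := by
  rw [lowerHalf_eq_map_castLE, sum_map]
  refine sum_congr rfl fun i _ => congrArg b (Fin.ext ?_)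
  exact Nat.mod_eq_of_lt i.isLt

lemma Zop_lowerHalf_sum_ket_xb (c : ZMod 2) :
    Zop m (lowerHalf m)
        (∑ b ∈ univ.filter (fun b : Fin m → ZMod 2 => ∑ i, b i = c), ket m (xb m b)) =
      (-1 : ℂ) ^ c.val •
        ∑ b ∈ univ.filter (fun b : Fin m → ZMod 2 => ∑ i, b i = c), ket m (xb m b) := by
  rw [map_sum, smul_sum]
  refine sum_congr rfl fun b hb => ?_
  rw [Zop_ket, sum_lowerHalf_xb, (mem_filter.mp hb).2]

end Codewords

theorem XI_logical_Z_general (m : ℕ) :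
    (∀ j : Fin (2*m),
        (Zop m (lowerHalf m)).comp (Zop m {j, tau m j}) =
          (Zop m {j, tau m j}).comp (Zop m (lowerHalf m))) ∧
    (∀ j k : Fin (2*m), ({j, tau m j} : Finset (Fin (2*m))) ≠ {k, tau m k} →
        (Zop m (lowerHalf m)).comp (Xop m {j, tau m j, k, tau m k}) =
          (Xop m {j, tau m j, k, tau m k}).comp (Zop m (lowerHalf m))) ∧
    Zop m (lowerHalf m) (ket0 m) = ket0 m ∧
    Zop m (lowerHalf m) (ket1 m) = -(ket1 m) := by
  refine ⟨fun j => Zop_comp_Zop_comm _ _, fun j k hjk => ?_, ?_, ?_⟩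
  · apply Zop_comp_Xop_comm_of_even
    rw [card_lowerHalf_inter_two_pairs_tau hjk]
    exact even_two
  · rw [ket0, map_smul, Zop_lowerHalf_sum_ket_xb, ZMod.val_zero, pow_zero, one_smul]
  · rw [ket1, map_smul, Zop_lowerHalf_sum_ket_xb, ZMod.val_one, pow_one, neg_one_smul, smul_neg]

/-- The weight-`m` operator `Z̄ = Zop {0, …, m−1}` is a logical Z operator of the X–I
code `Ξ(2m)`: it commutes with every Z-generator and every X-generator, fixes `|0̄⟩`
and negates `|1̄⟩`. -/
theorem XI_logical_Z (m : ℕ) (hm : 2 ≤ m) :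
    (∀ j : Fin (2*m),
        (Zop m (lowerHalf m)).comp (Zop m {j, tau m j}) =
          (Zop m {j, tau m j}).comp (Zop m (lowerHalf m))) ∧
    (∀ j k : Fin (2*m), ({j, tau m j} : Finset (Fin (2*m))) ≠ {k, tau m k} →
        (Zop m (lowerHalf m)).comp (Xop m {j, tau m j, k, tau m k}) =
          (Xop m {j, tau m j, k, tau m k}).comp (Zop m (lowerHalf m))) ∧
    Zop m (lowerHalf m) (ket0 m) = ket0 m ∧
    Zop m (lowerHalf m) (ket1 m) = -(ket1 m) :=
  XI_logical_Z_general m
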